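/- arXiv:1005.3178 — 2 statements merged into one kernel-verified Lean document; each statement's English description precedes it below -/
import Mathlib

section
/- Let K be a poset. (i) For every inclusion o ≤ a the map λ_{ao}([p]_w) := [(ao) * p * (ao)‾]_w is a well-defined group isomorphism λ_{ao} : Λ_o → Λ_a satisfying λ_{ao} ∘ λ_{oe} = λ_{ae} for e ≤ o ≤ a, so (Λ,λ)_K is a net bundle of discrete groups; moreover λ_{ao} maps Λ^l_o injectively into Λ^l_a, so (Λ^l,λ)_K is a net of discrete groups, and the inclusion maps i_o : Λ^l_o → Λ_o satisfy λ_{ao} ∘ i_o = i_a ∘ λ_{ao}, i.e. they constitute a monomorphism of nets of groups. (ii) If a group G acts on K by order-preserving bijections, then g_*([p]_w) := [gp]_w defines group isomorphisms g_* : Λ_o → Λ_{go} and g_* : Λ^l_o → Λ^l_{go} satisfying g_* ∘ λ_{ao} = λ_{ga,go} ∘ g_* for o ≤ a and g_* ∘ i_o = i_{go} ∘ g_*, so i is a monomorphism of G-covariant nets of groups. -/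
noncomputable section

universe u v w u' v' w'

namespace AQFT

/-! ### Simplices and paths in a poset -/

structure Simplex1 (K : Type u) [PartialOrder K] : Type u where
  supp : K
  d0 : K
  d1 : K
  le0 : d0 ≤ supp
  le1 : d1 ≤ supp

namespace Simplex1

variable {K : Type u} [PartialOrder K]

def op (s : Simplex1 K) : Simplex1 K := ⟨s.supp, s.d1, s.d0, s.le1, s.le0⟩

def deg (a : K) : Simplex1 K := ⟨a, a, a, le_rfl, le_rfl⟩

def map {L : Type u'} [PartialOrder L] (f : K →o L) (s : Simplex1 K) : Simplex1 L :=
  ⟨f s.supp, f s.d0, f s.d1, f.monotone s.le0, f.monotone s.le1⟩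

end Simplex1

structure Simplex2 (K : Type u) [PartialOrder K] : Type u where
  supp : K
  d0 : Simplex1 K
  d1 : Simplex1 K
  d2 : Simplex1 K
  le0 : d0.supp ≤ supp
  le1 : d1.supp ≤ supp
  le2 : d2.supp ≤ supp
  h00 : d0.d0 = d1.d0
  h11 : d1.d1 = d2.d1
  h10 : d0.d1 = d2.d0

inductive SPath (K : Type u) [PartialOrder K] : K → K → Type u
  | nil (a : K) : SPath K a a
  | cons {a b c : K} (p : SPath K a b) (s : Simplex1 K) (h1 : s.d1 = b) (h0 : s.d0 = c) :
      SPath K a c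

namespace SPath

variable {K : Type u} [PartialOrder K]

/-- The path consisting of a single 1-simplex. -/
def single {a b : K} (s : Simplex1 K) (h1 : s.d1 = a) (h0 : s.d0 = b) : SPath K a b :=
  .cons (.nil a) s h1 h0

/-- Composition of paths: first traverse `p`, then `q`. -/
def comp {a b : K} (p : SPath K a b) : {c : K} → SPath K b c → SPath K a c
  | _, .nil _ => p
  | _, .cons q s h1 h0 => .cons (p.comp q) s h1 h0

/-- The opposite (reverse) of a path. -/
def reverse {a : K} : {b : K} → SPath K a b → SPath K b a
  | _, .nil _ => .nil a
  | _, .cons p s h1 h0 => (single s.op h0 h1).comp p.reverse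

@[simp] theorem comp_nil {a b : K} (p : SPath K a b) : p.comp (.nil b) = p := rfl

@[simp] theorem nil_comp {a b : K} (p : SPath K a b) : (SPath.nil a).comp p = p := by
  induction p with
  | nil => rfl
  | cons p s h1 h0 ih =>
      show SPath.cons ((SPath.nil _).comp p) s h1 h0 = _
      rw [ih]

theorem comp_assoc {a b c d : K} (p : SPath K a b) (q : SPath K b c) (r : SPath K c d) :
    (p.comp q).comp r = p.comp (q.comp r) := by
  induction r with
  | nil => rfl
  | cons r s h1 h0 ih =>
      show SPath.cons ((p.comp q).comp r) s h1 h0 = SPath.cons (p.comp (q.comp r)) s h1 h0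
      rw [ih]

/-- All 1-simplices of the path have support `≤ o`. -/
def SuppLE (o : K) {a : K} : {b : K} → SPath K a b → Prop
  | _, .nil _ => True
  | _, .cons p s _ _ => SuppLE o p ∧ s.supp ≤ o

/-- All supports and faces of the path belong to `P`. -/
def MemAll (P : Set K) {a : K} : {b : K} → SPath K a b → Prop
  | _, .nil _ => True
  | _, .cons p s _ _ => MemAll P p ∧ s.supp ∈ P ∧ s.d0 ∈ P ∧ s.d1 ∈ P

theorem SuppLE.comp {o : K} {a b c : K} {p : SPath K a b} {q : SPath K b c}
    (hp : SuppLE o p) (hq : SuppLE o q) : SuppLE o (p.comp q) := by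
  induction q with
  | nil => exact hp
  | cons q s h1 h0 ih => exact ⟨ih hq.1, hq.2⟩

theorem SuppLE.reverse {o : K} {a b : K} {p : SPath K a b} (hp : SuppLE o p) :
    SuppLE o p.reverse := by
  induction p with
  | nil => trivial
  | cons p s h1 h0 ih => exact SuppLE.comp ⟨trivial, hp.2⟩ (ih hp.1)

/-- Mapping paths along a monotone map. -/
def map {L : Type u'} [PartialOrder L] (f : K →o L) {a : K} :
    {b : K} → SPath K a b → SPath L (f a) (f b)
  | _, .nil _ => .nil (f a)
  | _, .cons p s h1 h0 => .cons (map f p) (s.map f) (congrArg f h1) (congrArg f h0)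

/-- The path of the nerve 1-simplex associated with an inclusion `o ≤ a`. -/
def nervePath {o a : K} (h : o ≤ a) : SPath K o a :=
  single ⟨a, a, o, le_rfl, h⟩ rfl rfl


/-! ### w-equivalence of paths -/

inductive WEquiv : {a b : K} → SPath K a b → SPath K a b → Prop
  | refl {a b : K} (p : SPath K a b) : WEquiv p p
  | symm {a b : K} {p q : SPath K a b} : WEquiv p q → WEquiv q p
  | trans {a b : K} {p q r : SPath K a b} : WEquiv p q → WEquiv q r → WEquiv p r
  | comp_congr {a b c : K} {p p' : SPath K a b} {q q' : SPath K b c} :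
      WEquiv p p' → WEquiv q q' → WEquiv (p.comp q) (p'.comp q')
  /- move (1): inserting a degenerate 1-simplex -/
  | degen {a : K} (s : Simplex1 K) (h0 : s.d0 = a) (h1 : s.d1 = a) (hs : s.supp = a) :
      WEquiv (SPath.nil a) (single s h1 h0)
  /- move (2): a 2-simplex all of whose faces are 1-simplices of the nerve -/
  | nerveTri {a b : K} (c : Simplex2 K) (hn0 : c.d0.d0 = c.d0.supp)
      (hn1 : c.d1.d0 = c.d1.supp) (hn2 : c.d2.d0 = c.d2.supp)
      (h1 : c.d2.d1 = a) (h0 : c.d0.d0 = b) :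
      WEquiv ((single c.d2 h1 rfl).comp (single c.d0 c.h10 h0))
        (single c.d1 (c.h11.trans h1) (c.h00.symm.trans h0))
  /- move (3): replacing `b̄ * b` by the degenerate 1-simplex at `∂₁ b` -/
  | cancel {a b : K} (s : Simplex1 K) (h1 : s.d1 = a) (h0 : s.d0 = b) :
      WEquiv ((single s h1 h0).comp (single s.op h0 h1)) (single (Simplex1.deg a) rfl rfl)

theorem w_single_comp_op {a b : K} (s : Simplex1 K) (h1 : s.d1 = a) (h0 : s.d0 = b) :
    WEquiv ((single s h1 h0).comp (single s.op h0 h1)) (SPath.nil a) :=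
  (WEquiv.cancel s h1 h0).trans (WEquiv.degen (Simplex1.deg a) rfl rfl rfl).symm

theorem w_comp_reverse_self {a b : K} (p : SPath K a b) :
    WEquiv (p.comp p.reverse) (SPath.nil a) := by
  induction p with
  | nil => exact .refl _
  | cons p s h1 h0 ih =>
      show WEquiv ((p.comp (single s h1 h0)).comp ((single s.op h0 h1).comp p.reverse)) _
      rw [comp_assoc, ← comp_assoc (single s h1 h0)]
      have h2 : WEquiv (((single s h1 h0).comp (single s.op h0 h1)).comp p.reverse)
          p.reverse := by
        have h3 := WEquiv.comp_congr (w_single_comp_op s h1 h0) (WEquiv.refl p.reverse)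
        rwa [nil_comp] at h3
      exact (WEquiv.comp_congr (WEquiv.refl p) h2).trans ih

theorem w_reverse_comp_self {a b : K} (p : SPath K a b) :
    WEquiv (p.reverse.comp p) (SPath.nil b) := by
  induction p with
  | nil => exact .refl _
  | cons p s h1 h0 ih =>
      show WEquiv (((single s.op h0 h1).comp p.reverse).comp (p.comp (single s h1 h0))) _
      rw [comp_assoc, ← comp_assoc p.reverse]
      have h2 : WEquiv ((p.reverse.comp p).comp (single s h1 h0)) (single s h1 h0) := by
        have h3 := WEquiv.comp_congr ih (WEquiv.refl (single s h1 h0))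
        rwa [nil_comp] at h3
      have h4 : WEquiv ((single s.op h0 h1).comp ((p.reverse.comp p).comp (single s h1 h0)))
          ((single s.op h0 h1).comp (single s h1 h0)) :=
        WEquiv.comp_congr (WEquiv.refl _) h2
      exact h4.trans (w_single_comp_op s.op h0 h1)

theorem WEquiv.reverse_congr {a b : K} {p q : SPath K a b} (h : WEquiv p q) :
    WEquiv p.reverse q.reverse := by
  have e1 : WEquiv p.reverse (p.reverse.comp (q.comp q.reverse)) :=
    WEquiv.comp_congr (WEquiv.refl p.reverse) (w_comp_reverse_self q).symm
  have e2 : WEquiv (p.reverse.comp (q.comp q.reverse)) ((p.reverse.comp p).comp q.reverse) := by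
    rw [comp_assoc]
    exact WEquiv.comp_congr (WEquiv.refl _)
      (WEquiv.comp_congr h.symm (WEquiv.refl _))
  have e3 : WEquiv ((p.reverse.comp p).comp q.reverse) q.reverse := by
    have h3 := WEquiv.comp_congr (w_reverse_comp_self p) (WEquiv.refl q.reverse)
    rwa [nil_comp] at h3
  exact (e1.trans e2).trans e3

end SPath

/-! ### The w-groups of loops -/

instance wSetoid (K : Type u) [PartialOrder K] (o : K) : Setoid (SPath K o o) where
  r := SPath.WEquiv
  iseqv := ⟨fun p => .refl p, fun h => h.symm, fun h h' => h.trans h'⟩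

/-- The w-group of loops `Λ_o` over `o`. -/
def WLoop (K : Type u) [PartialOrder K] (o : K) : Type u := Quotient (wSetoid K o)

namespace WLoop

variable {K : Type u} [PartialOrder K] {o : K}

def mk (p : SPath K o o) : WLoop K o := Quotient.mk _ p

instance : One (WLoop K o) := ⟨mk (SPath.nil o)⟩

instance : Mul (WLoop K o) :=
  ⟨Quotient.map₂ (fun p q => q.comp p)
    (fun _ _ hp _ _ hq => SPath.WEquiv.comp_congr hq hp)⟩

instance : Inv (WLoop K o) :=
  ⟨Quotient.map SPath.reverse (fun _ _ h => h.reverse_congr)⟩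

instance : Group (WLoop K o) where
  mul_assoc x y z := by
    refine Quotient.inductionOn₃ x y z ?_
    intro p q r
    show mk (r.comp (q.comp p)) = mk ((r.comp q).comp p)
    rw [SPath.comp_assoc]
  one_mul x := Quotient.inductionOn x fun p => rfl
  mul_one x := Quotient.inductionOn x fun p => congrArg mk (SPath.nil_comp p)
  inv_mul_cancel x := Quotient.inductionOn x fun p => Quotient.sound (SPath.w_comp_reverse_self p)

end WLoop

/-- The w-group `Λ^l_o` of loops supported in `o`, as a subgroup of `Λ_o`. -/
def WLoopLoc (K : Type u) [PartialOrder K] (o : K) : Subgroup (WLoop K o) where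
  carrier := {x | ∃ p : SPath K o o, SPath.SuppLE o p ∧ WLoop.mk p = x}
  one_mem' := ⟨SPath.nil o, trivial, rfl⟩
  mul_mem' := by
    rintro x y ⟨p, hp, rfl⟩ ⟨q, hq, rfl⟩
    exact ⟨q.comp p, SPath.SuppLE.comp hq hp, rfl⟩
  inv_mem' := by
    rintro x ⟨p, hp, rfl⟩
    exact ⟨p.reverse, SPath.SuppLE.reverse hp, rfl⟩

/-- The order-preserving map on the poset given by the action of `g ∈ G`. -/
def smulOrderHom {K : Type u} [PartialOrder K] {G : Type v} [Group G] [MulAction G K]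
    (hord : ∀ (g : G) (a b : K), a ≤ b → g • a ≤ g • b) (g : G) : K →o K :=
  ⟨fun x => g • x, fun _ _ h => hord g _ _ h⟩

/-!
Conjugating loops at `o` by a path `t : o → a`, `p ↦ t * p * t̄`, respects w-equivalence and
concatenation, and conjugation by `t̄` undoes it up to the cancellation moves, so it is an
isomorphism `Λ_o ≃* Λ_a`. It only depends on the w-class of `t`, and conjugating by `t` and then
by `u` is conjugating by `u * t`; since `(ao) * (oe)` is w-equivalent to `(ae)` through a
2-simplex of the nerve, the maps `λ` satisfy the net relations. Monotone maps of posets carry each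
kind of w-deformation to one of the same kind, so they act on w-classes compatibly with
conjugation, and an order automorphism acts by isomorphisms. Conjugating a loop supported in `o`
by `(ao)` gives a loop supported in `a`, and monotone maps preserve support bounds; this gives the
statements about `Λ^l`.
-/

namespace Simplex2

variable {K : Type u} [PartialOrder K]

def map {L : Type u'} [PartialOrder L] (f : K →o L) (c : Simplex2 K) : Simplex2 L :=
  ⟨f c.supp, c.d0.map f, c.d1.map f, c.d2.map f, f.monotone c.le0, f.monotone c.le1,
    f.monotone c.le2, congrArg f c.h00, congrArg f c.h11, congrArg f c.h10⟩

end Simplex2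

namespace SPath

variable {K : Type u} [PartialOrder K] {L : Type u'} [PartialOrder L]

theorem reverse_comp {a b c : K} (p : SPath K a b) (q : SPath K b c) :
    (p.comp q).reverse = q.reverse.comp p.reverse := by
  induction q with
  | nil => simp [reverse]
  | cons q s h1 h0 ih =>
      show (single s.op h0 h1).comp (p.comp q).reverse = _
      rw [ih, ← comp_assoc]
      rfl

theorem WEquiv.comp_left {a b c : K} (p : SPath K a b) {q q' : SPath K b c}
    (h : WEquiv q q') : WEquiv (p.comp q) (p.comp q') :=
  .comp_congr (.refl p) h

theorem WEquiv.comp_right {a b c : K} {p p' : SPath K a b} (h : WEquiv p p')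
    (q : SPath K b c) : WEquiv (p.comp q) (p'.comp q) :=
  .comp_congr h (.refl q)

theorem comp_comp_reverse_comp {a b c d : K} (p : SPath K a b) (t : SPath K b c)
    (q : SPath K b d) : WEquiv ((p.comp t).comp (t.reverse.comp q)) (p.comp q) := by
  rw [comp_assoc, ← comp_assoc t]
  refine WEquiv.comp_left p ?_
  simpa using (w_comp_reverse_self t).comp_right q

/-! ### Conjugation of loops by a path -/

def conj {o a : K} (t : SPath K o a) (p : SPath K o o) : SPath K a a :=
  t.reverse.comp (p.comp t)

@[simp] theorem conj_nil {o : K} (p : SPath K o o) : conj (nil o) p = p :=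
  nil_comp p

theorem conj_conj {o a b : K} (t : SPath K o a) (u : SPath K a b) (p : SPath K o o) :
    conj u (conj t p) = conj (t.comp u) p := by
  simp only [conj, reverse_comp, comp_assoc]

theorem WEquiv.conj_congr {o a : K} {t t' : SPath K o a} {p p' : SPath K o o}
    (ht : WEquiv t t') (hp : WEquiv p p') : WEquiv (conj t p) (conj t' p') :=
  .comp_congr ht.reverse_congr (.comp_congr hp ht)

theorem conj_comp {o a : K} (t : SPath K o a) (p q : SPath K o o) :
    WEquiv (conj t (q.comp p)) ((conj t q).comp (conj t p)) := by
  have h := comp_comp_reverse_comp (t.reverse.comp q) t (p.comp t)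
  simp only [comp_assoc] at h
  simpa only [conj, comp_assoc] using h.symm

theorem conj_reverse_conj {o a : K} (t : SPath K o a) (p : SPath K o o) :
    WEquiv (conj t.reverse (conj t p)) p := by
  simpa [conj_conj] using (w_comp_reverse_self t).conj_congr (.refl p)

theorem conj_conj_reverse {o a : K} (t : SPath K o a) (q : SPath K a a) :
    WEquiv (conj t (conj t.reverse q)) q := by
  simpa [conj_conj] using (w_reverse_comp_self t).conj_congr (.refl q)

theorem nervePath_comp {e o a : K} (h1 : e ≤ o) (h2 : o ≤ a) :
    WEquiv ((nervePath h1).comp (nervePath h2)) (nervePath (h1.trans h2)) :=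
  .nerveTri ⟨a, ⟨a, a, o, le_rfl, h2⟩, ⟨a, a, e, le_rfl, h1.trans h2⟩, ⟨o, o, e, le_rfl, h1⟩,
      le_rfl, le_rfl, h2, rfl, rfl, rfl⟩ rfl rfl rfl rfl rfl

/-! ### Supports -/

theorem SuppLE.mono {o o' a b : K} (h : o ≤ o') {p : SPath K a b} (hp : SuppLE o p) :
    SuppLE o' p := by
  induction p with
  | nil => trivial
  | cons p s h1 h0 ih => exact ⟨ih hp.1, hp.2.trans h⟩

theorem SuppLE.conj {o a : K} {t : SPath K o a} {p : SPath K o o} (ht : SuppLE a t)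
    (hp : SuppLE a p) : SuppLE a (conj t p) :=
  ht.reverse.comp (hp.comp ht)

theorem suppLE_nervePath {o a : K} (h : o ≤ a) : SuppLE a (nervePath h) :=
  ⟨trivial, le_rfl⟩

theorem SuppLE.map (f : K →o L) {o a b : K} {p : SPath K a b} (hp : SuppLE o p) :
    SuppLE (f o) (p.map f) := by
  induction p with
  | nil => trivial
  | cons p s h1 h0 ih => exact ⟨ih hp.1, f.monotone hp.2⟩

/-! ### Functoriality in the poset -/

theorem map_comp (f : K →o L) {a b c : K} (p : SPath K a b) (q : SPath K b c) :
    (p.comp q).map f = (p.map f).comp (q.map f) := by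
  induction q with
  | nil => rfl
  | cons q s h1 h0 ih => exact congrArg (fun r => cons r _ _ _) ih

theorem map_reverse (f : K →o L) {a b : K} (p : SPath K a b) :
    p.reverse.map f = (p.map f).reverse := by
  induction p with
  | nil => rfl
  | cons p s h1 h0 ih =>
      show ((single s.op h0 h1).comp p.reverse).map f = _
      rw [map_comp, ih]
      rfl

theorem map_conj (f : K →o L) {o a : K} (t : SPath K o a) (p : SPath K o o) :
    (conj t p).map f = conj (t.map f) (p.map f) := by
  simp only [conj, map_comp, map_reverse]

theorem map_map {M : Type w} [PartialOrder M] (f : K →o L) (g : L →o M) {a b : K}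
    (p : SPath K a b) : (p.map f).map g = p.map (g.comp f) := by
  induction p with
  | nil => rfl
  | cons p s h1 h0 ih => exact congrArg (fun r => cons r _ _ _) ih

theorem map_id {a b : K} (p : SPath K a b) : p.map OrderHom.id = p := by
  induction p with
  | nil => rfl
  | cons p s h1 h0 ih => exact congrArg (fun r => cons r _ _ _) ih

theorem WEquiv.map (f : K →o L) {a b : K} {p q : SPath K a b} (h : WEquiv p q) :
    WEquiv (p.map f) (q.map f) := by
  induction h with
  | refl p => exact .refl _
  | symm _ ih => exact ih.symm
  | trans _ _ ih1 ih2 => exact ih1.trans ih2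
  | comp_congr _ _ ih1 ih2 => rw [map_comp, map_comp]; exact .comp_congr ih1 ih2
  | degen s h0 h1 hs => exact .degen (s.map f) (congrArg f h0) (congrArg f h1) (congrArg f hs)
  | nerveTri c hn0 hn1 hn2 h1 h0 =>
      rw [map_comp]
      exact .nerveTri (c.map f) (congrArg f hn0) (congrArg f hn1) (congrArg f hn2)
        (congrArg f h1) (congrArg f h0)
  | cancel s h1 h0 =>
      rw [map_comp]
      exact .cancel (s.map f) (congrArg f h1) (congrArg f h0)

def cast {a b a' b' : K} (ha : a = a') (hb : b = b') (p : SPath K a b) : SPath K a' b' :=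
  ha ▸ hb ▸ p

theorem WEquiv.cast {a b a' b' : K} (ha : a = a') (hb : b = b') {p q : SPath K a b}
    (h : WEquiv p q) : WEquiv (p.cast ha hb) (q.cast ha hb) := by
  subst ha hb
  exact h

theorem map_cast (f : K →o L) {a b a' b' : K} (ha : a = a') (hb : b = b') (p : SPath K a b) :
    (p.cast ha hb).map f = (p.map f).cast (congrArg f ha) (congrArg f hb) := by
  subst ha hb
  rfl

theorem cast_map_of_forall_eq_self (φ : K →o K) (hφ : ∀ x, φ x = x) {a b : K}
    (p : SPath K a b) : (p.map φ).cast (hφ a) (hφ b) = p := by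
  obtain rfl : φ = OrderHom.id := OrderHom.ext _ _ (funext hφ)
  exact map_id p

end SPath

namespace WLoop

variable {K : Type u} [PartialOrder K] {L : Type u'} [PartialOrder L]

/-! ### Conjugation isomorphisms -/

def conjEquiv {o a : K} (t : SPath K o a) : WLoop K o ≃* WLoop K a where
  toFun := Quotient.map (SPath.conj t) fun _ _ h => (SPath.WEquiv.refl t).conj_congr h
  invFun := Quotient.map (SPath.conj t.reverse) fun _ _ h => (SPath.WEquiv.refl _).conj_congr h
  left_inv := Quotient.ind fun p => Quotient.sound (SPath.conj_reverse_conj t p)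
  right_inv := Quotient.ind fun q => Quotient.sound (SPath.conj_conj_reverse t q)
  map_mul' := Quotient.ind₂ fun p q => Quotient.sound (SPath.conj_comp t p q)

theorem conjEquiv_conjEquiv {o a b : K} (t : SPath K o a) (u : SPath K a b) (x : WLoop K o) :
    conjEquiv u (conjEquiv t x) = conjEquiv (t.comp u) x :=
  Quotient.inductionOn x fun p => congrArg mk (SPath.conj_conj t u p)

theorem conjEquiv_congr {o a : K} {t t' : SPath K o a} (h : SPath.WEquiv t t') (x : WLoop K o) :
    conjEquiv t x = conjEquiv t' x :=
  Quotient.inductionOn x fun p => Quotient.sound (h.conj_congr (.refl p))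

theorem conjEquiv_mem_wLoopLoc {o a : K} (hoa : o ≤ a) {t : SPath K o a}
    (ht : SPath.SuppLE a t) {x : WLoop K o} (hx : x ∈ WLoopLoc K o) :
    conjEquiv t x ∈ WLoopLoc K a := by
  obtain ⟨p, hp, rfl⟩ := hx
  exact ⟨SPath.conj t p, ht.conj (hp.mono hoa), rfl⟩

/-! ### Action of monotone maps -/

def map (f : K →o L) (o : K) : WLoop K o →* WLoop L (f o) where
  toFun := Quotient.map (SPath.map f) fun _ _ h => h.map f
  map_one' := rfl
  map_mul' := Quotient.ind₂ fun p q => congrArg mk (SPath.map_comp f q p)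

theorem map_conjEquiv (f : K →o L) {o a : K} (t : SPath K o a) (x : WLoop K o) :
    map f a (conjEquiv t x) = conjEquiv (t.map f) (map f o x) :=
  Quotient.inductionOn x fun p => congrArg mk (SPath.map_conj f t p)

theorem map_mem_wLoopLoc (f : K →o L) {o : K} {x : WLoop K o} (hx : x ∈ WLoopLoc K o) :
    map f o x ∈ WLoopLoc L (f o) := by
  obtain ⟨p, hp, rfl⟩ := hx
  exact ⟨p.map f, hp.map f, rfl⟩

def mapEquiv (f : K →o L) (f' : L →o K) (h₁ : ∀ x, f' (f x) = x) (h₂ : ∀ y, f (f' y) = y)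
    (o : K) : WLoop K o ≃* WLoop L (f o) where
  __ := map f o
  invFun := Quotient.map (fun q => (q.map f').cast (h₁ o) (h₁ o))
    fun _ _ h => (h.map f').cast _ _
  left_inv := Quotient.ind fun p => congrArg mk <| by
    simp only [SPath.map_map]
    exact SPath.cast_map_of_forall_eq_self (f'.comp f) h₁ p
  right_inv := Quotient.ind fun q => congrArg mk <| by
    simp only [SPath.map_cast, SPath.map_map]
    exact SPath.cast_map_of_forall_eq_self (f.comp f') h₂ q

end WLoop

/-- (i) conjugation by the nerve 1-simplices gives well-defined group
isomorphisms `λ_{ao} : Λ_o → Λ_a` compatible with compositions of inclusions (so that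
`(Λ, λ)_K` is a net bundle of discrete groups), mapping `Λ^l_o` into `Λ^l_a` (so that
`(Λ^l, λ)_K` is a net of discrete groups and the inclusions `i_o : Λ^l_o → Λ_o` form a
monomorphism of nets of groups); (ii) a symmetry group `G` of `K` acts by group
isomorphisms `g_* : Λ_o → Λ_{go}` compatibly with `λ` and preserving `Λ^l`, so that
`i` is a monomorphism of `G`-covariant nets of groups. -/
theorem statement_0 {K : Type u} [PartialOrder K] (G : Type v) [Group G] [MulAction G K]
    (hord : ∀ (g : G) (a b : K), a ≤ b → g • a ≤ g • b) :
    ∃ lam : ∀ ⦃o a : K⦄, o ≤ a → (WLoop K o ≃* WLoop K a),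
      -- definition of λ_{ao} on classes of loops
      (∀ ⦃o a : K⦄ (h : o ≤ a) (p : SPath K o o),
          lam h (WLoop.mk p)
            = WLoop.mk ((SPath.nervePath h).reverse.comp (p.comp (SPath.nervePath h)))) ∧
      -- net relations: λ_{ao} ∘ λ_{oe} = λ_{ae}
      (∀ ⦃e o a : K⦄ (h1 : e ≤ o) (h2 : o ≤ a) (x : WLoop K e),
          lam h2 (lam h1 x) = lam (h1.trans h2) x) ∧
      -- λ_{ao} maps Λ^l_o (injectively) into Λ^l_a
      (∀ ⦃o a : K⦄ (h : o ≤ a) (x : WLoop K o), x ∈ WLoopLoc K o → lam h x ∈ WLoopLoc K a) ∧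
      -- (ii) the G-action
      ∃ gact : ∀ (g : G) (o : K), WLoop K o ≃* WLoop K (g • o),
        (∀ (g : G) (o : K) (p : SPath K o o),
            gact g o (WLoop.mk p) = WLoop.mk (SPath.map (smulOrderHom hord g) p)) ∧
        (∀ (g : G) ⦃o a : K⦄ (h : o ≤ a) (x : WLoop K o),
            gact g a (lam h x) = lam (hord g o a h) (gact g o x)) ∧
        (∀ (g : G) (o : K) (x : WLoop K o),
            x ∈ WLoopLoc K o → gact g o x ∈ WLoopLoc K (g • o)) := by
  refine ⟨fun o a h => WLoop.conjEquiv (SPath.nervePath h), fun o a h p => rfl,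
    fun e o a h1 h2 x => ?_, fun o a h x hx => ?_, ?_⟩
  · rw [WLoop.conjEquiv_conjEquiv]
    exact WLoop.conjEquiv_congr (SPath.nervePath_comp h1 h2) x
  · exact WLoop.conjEquiv_mem_wLoopLoc h (SPath.suppLE_nervePath h) hx
  refine ⟨fun g => WLoop.mapEquiv (smulOrderHom hord g) (smulOrderHom hord g⁻¹)
    (inv_smul_smul g) (smul_inv_smul g), fun g o p => rfl, fun g o a h x => ?_,
    fun g o x hx => WLoop.map_mem_wLoopLoc (smulOrderHom hord g) hx⟩
  exact WLoop.map_conjEquiv (smulOrderHom hord g) (SPath.nervePath h) x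

end AQFT
end
end

section
/- Let (A,j)_K be a C*-net bundle over a pathwise connected poset K, and set j_b := j_{|b|∂₀b}⁻¹ ∘ j_{|b|∂₁b} for every 1-simplex b and j_p := j_{b_n} ∘ ⋯ ∘ j_{b_1} for every path p = b_n * ⋯ * b_1. Then: (a) j_{∂₀c} ∘ j_{∂₂c} = j_{∂₁c} for every 2-simplex c; (b) j_p = j_q whenever p and q are homotopic paths with the same endpoints; (c) for every o ∈ K the map [p] ↦ j_p is a group homomorphism from π₁ᵒ(K) into the group of *-automorphisms of A_o. -/
noncomputable section

universe u v w u' v' w' u'' v'' w''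

namespace AQFT

namespace SPath

variable {K : Type u} [PartialOrder K]

/-! ### Homotopy of paths -/

inductive Homotopic : {a b : K} → SPath K a b → SPath K a b → Prop
  | refl {a b : K} (p : SPath K a b) : Homotopic p p
  | symm {a b : K} {p q : SPath K a b} : Homotopic p q → Homotopic q p
  | trans {a b : K} {p q r : SPath K a b} : Homotopic p q → Homotopic q r → Homotopic p r
  | comp_congr {a b c : K} {p p' : SPath K a b} {q q' : SPath K b c} :
      Homotopic p p' → Homotopic q q' → Homotopic (p.comp q) (p'.comp q')
  | degen {a : K} (s : Simplex1 K) (h0 : s.d0 = a) (h1 : s.d1 = a) (hs : s.supp = a) :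
      Homotopic (SPath.nil a) (single s h1 h0)
  | triangle {a b : K} (c : Simplex2 K) (h1 : c.d2.d1 = a) (h0 : c.d0.d0 = b) :
      Homotopic ((single c.d2 h1 rfl).comp (single c.d0 c.h10 h0))
        (single c.d1 (c.h11.trans h1) (c.h00.symm.trans h0))

theorem single_comp_op {a b : K} (s : Simplex1 K) (h1 : s.d1 = a) (h0 : s.d0 = b) :
    Homotopic ((single s h1 h0).comp (single s.op h0 h1)) (SPath.nil a) := by
  subst h1; subst h0
  have ht := Homotopic.triangle
    (⟨s.supp, s.op, Simplex1.deg s.d1, s, le_rfl, s.le1, le_rfl, rfl, rfl, rfl⟩ : Simplex2 K)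
    rfl rfl
  have hd := Homotopic.degen (K := K) (Simplex1.deg s.d1) rfl rfl rfl
  exact ht.trans hd.symm

theorem comp_reverse_self {a b : K} (p : SPath K a b) :
    Homotopic (p.comp p.reverse) (SPath.nil a) := by
  induction p with
  | nil => exact .refl _
  | cons p s h1 h0 ih =>
      show Homotopic ((p.comp (single s h1 h0)).comp ((single s.op h0 h1).comp p.reverse)) _
      rw [comp_assoc, ← comp_assoc (single s h1 h0)]
      have h2 : Homotopic (((single s h1 h0).comp (single s.op h0 h1)).comp p.reverse)
          p.reverse := by
        have h3 := Homotopic.comp_congr (single_comp_op s h1 h0) (Homotopic.refl p.reverse)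
        rwa [nil_comp] at h3
      exact (Homotopic.comp_congr (Homotopic.refl p) h2).trans ih

theorem reverse_comp_self {a b : K} (p : SPath K a b) :
    Homotopic (p.reverse.comp p) (SPath.nil b) := by
  induction p with
  | nil => exact .refl _
  | cons p s h1 h0 ih =>
      show Homotopic (((single s.op h0 h1).comp p.reverse).comp (p.comp (single s h1 h0))) _
      rw [comp_assoc, ← comp_assoc p.reverse]
      have h2 : Homotopic ((p.reverse.comp p).comp (single s h1 h0)) (single s h1 h0) := by
        have h3 := Homotopic.comp_congr ih (Homotopic.refl (single s h1 h0))
        rwa [nil_comp] at h3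
      have h4 : Homotopic ((single s.op h0 h1).comp ((p.reverse.comp p).comp (single s h1 h0)))
          ((single s.op h0 h1).comp (single s h1 h0)) :=
        Homotopic.comp_congr (Homotopic.refl _) h2
      exact h4.trans (single_comp_op s.op h0 h1)

theorem Homotopic.reverse_congr {a b : K} {p q : SPath K a b} (h : Homotopic p q) :
    Homotopic p.reverse q.reverse := by
  have e1 : Homotopic p.reverse (p.reverse.comp (q.comp q.reverse)) :=
    Homotopic.comp_congr (Homotopic.refl p.reverse) (comp_reverse_self q).symm
  have e2 : Homotopic (p.reverse.comp (q.comp q.reverse)) ((p.reverse.comp p).comp q.reverse) := by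
    rw [comp_assoc]
    exact Homotopic.comp_congr (Homotopic.refl _)
      (Homotopic.comp_congr h.symm (Homotopic.refl _))
  have e3 : Homotopic ((p.reverse.comp p).comp q.reverse) q.reverse := by
    have h3 := Homotopic.comp_congr (reverse_comp_self p) (Homotopic.refl q.reverse)
    rwa [nil_comp] at h3
  exact (e1.trans e2).trans e3

end SPath

/-! ### The fundamental group of a poset -/

instance homotopySetoid (K : Type u) [PartialOrder K] (o : K) : Setoid (SPath K o o) where
  r := SPath.Homotopic
  iseqv := ⟨fun p => .refl p, fun h => h.symm, fun h h' => h.trans h'⟩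

def Pi1 (K : Type u) [PartialOrder K] (o : K) : Type u := Quotient (homotopySetoid K o)

namespace Pi1

variable {K : Type u} [PartialOrder K] {o : K}

def mk (p : SPath K o o) : Pi1 K o := Quotient.mk _ p

instance : One (Pi1 K o) := ⟨mk (SPath.nil o)⟩

instance : Mul (Pi1 K o) :=
  ⟨Quotient.map₂ (fun p q => q.comp p)
    (fun _ _ hp _ _ hq => SPath.Homotopic.comp_congr hq hp)⟩

instance : Inv (Pi1 K o) :=
  ⟨Quotient.map SPath.reverse (fun _ _ h => h.reverse_congr)⟩

instance : Group (Pi1 K o) where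
  mul_assoc x y z := by
    refine Quotient.inductionOn₃ x y z ?_
    intro p q r
    show mk (r.comp (q.comp p)) = mk ((r.comp q).comp p)
    rw [SPath.comp_assoc]
  one_mul x := Quotient.inductionOn x fun p => rfl
  mul_one x := Quotient.inductionOn x fun p => congrArg mk (SPath.nil_comp p)
  inv_mul_cancel x := Quotient.inductionOn x fun p => Quotient.sound (SPath.comp_reverse_self p)

end Pi1

/-! ### Nets of C*-algebras over a poset -/

open scoped ComplexOrder

variable {K : Type u} [PartialOrder K]

structure CStarNet (K : Type u) [PartialOrder K] where
  fib : K → Type v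
  [cstar : ∀ o, CStarAlgebra (fib o)]
  incl : ∀ ⦃a o : K⦄, a ≤ o → (fib a →⋆ₐ[ℂ] fib o)
  incl_injective : ∀ ⦃a o : K⦄ (h : a ≤ o), Function.Injective (incl h)
  incl_comp : ∀ ⦃e a o : K⦄ (h1 : e ≤ a) (h2 : a ≤ o) (x : fib e),
      incl h2 (incl h1 x) = incl (h1.trans h2) x

attribute [instance] CStarNet.cstar

/-- A C*-net bundle: all the inclusion maps are isomorphisms. -/
def IsCStarNetBundle (N : CStarNet.{u, v} K) : Prop :=
  ∀ ⦃a o : K⦄ (h : a ≤ o), Function.Bijective (N.incl h)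

/-- Morphisms of nets over (possibly) different posets, over the poset map `f`. -/
def IsNetMorphism {K : Type u} {S : Type u'} [PartialOrder K] [PartialOrder S]
    (N : CStarNet.{u, v} K) (M : CStarNet.{u', v'} S) (f : K →o S)
    (φ : ∀ o : K, N.fib o →⋆ₐ[ℂ] M.fib (f o)) : Prop :=
  ∀ ⦃a o : K⦄ (h : a ≤ o) (x : N.fib a), φ o (N.incl h x) = M.incl (f.monotone h) (φ a x)

/-- Morphisms of nets over the same poset (over the identity of the poset). -/
def IsNetMorphismOver (N : CStarNet.{u, v} K) (M : CStarNet.{u, v'} K)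
    (φ : ∀ o : K, N.fib o →⋆ₐ[ℂ] M.fib o) : Prop :=
  ∀ ⦃a o : K⦄ (h : a ≤ o) (x : N.fib a), φ o (N.incl h x) = M.incl h (φ a x)

namespace CStarNet

def fibCast (N : CStarNet.{u, v} K) {a b : K} (h : a = b) : N.fib a ≃⋆ₐ[ℂ] N.fib b := by
  subst h; exact StarAlgEquiv.refl ℂ _

/-- The isomorphism determined by an inclusion map of a C*-net bundle. -/
def holEquiv (N : CStarNet.{u, v} K) (hN : IsCStarNetBundle N) ⦃a o : K⦄ (h : a ≤ o) :
    N.fib a ≃⋆ₐ[ℂ] N.fib o :=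
  StarAlgEquiv.ofBijective (N.incl h) (hN h)

/-- The 1-cocycle `j_b` associated with a 1-simplex `b` of the poset. -/
def hol1 (N : CStarNet.{u, v} K) (hN : IsCStarNetBundle N) (s : Simplex1 K) :
    N.fib s.d1 ≃⋆ₐ[ℂ] N.fib s.d0 :=
  (N.holEquiv hN s.le1).trans (N.holEquiv hN s.le0).symm

/-- The extension `j_p` of the 1-cocycle from 1-simplices to paths. -/
def holPath (N : CStarNet.{u, v} K) (hN : IsCStarNetBundle N) {a : K} :
    {b : K} → SPath K a b → (N.fib a ≃⋆ₐ[ℂ] N.fib b)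
  | _, .nil _ => StarAlgEquiv.refl ℂ _
  | _, .cons p s h1 h0 =>
      (holPath N hN p).trans (((N.fibCast h1.symm).trans (N.hol1 hN s)).trans (N.fibCast h0))

end CStarNet

/-- A net is trivial if it is isomorphic to a constant net bundle. -/
def IsTrivialNet (N : CStarNet.{u, v} K) : Prop :=
  ∀ o₀ : K, ∃ τ : ∀ a, N.fib a ≃⋆ₐ[ℂ] N.fib o₀,
    ∀ ⦃a o : K⦄ (h : a ≤ o) (x : N.fib a), τ o (N.incl h x) = τ a x

/-- `(NB, ε)` is an enveloping net bundle of the net `N`. -/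
def IsEnvelope (N : CStarNet.{u, v} K) (NB : CStarNet.{u, max u v} K)
    (ε : ∀ o, N.fib o →⋆ₐ[ℂ] NB.fib o) : Prop :=
  IsCStarNetBundle NB ∧ IsNetMorphismOver N NB ε ∧
    ∀ (M : CStarNet.{u, max u v} K), IsCStarNetBundle M →
      ∀ ψ : ∀ o, N.fib o →⋆ₐ[ℂ] M.fib o, IsNetMorphismOver N M ψ →
        ∃! ψu : ∀ o, NB.fib o →⋆ₐ[ℂ] M.fib o,
          IsNetMorphismOver NB M ψu ∧ ∀ o x, ψu o (ε o x) = ψ o x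

/-- The net `N` is nondegenerate w.r.t. the enveloping net bundle `NB`. -/
def IsNondegenerate (NB : CStarNet.{u, v'} K) : Prop :=
  ∀ o : K, Nontrivial (NB.fib o)

/-! ### States -/

/-- A state on a unital C*-algebra. -/
structure CStarAlgState (A : Type v) [CStarAlgebra A] where
  lin : A →ₗ[ℂ] ℂ
  map_one : lin 1 = 1
  pos : ∀ a : A, 0 ≤ lin (star a * a)

/-- A state on a net of C*-algebras. -/
structure NetState (N : CStarNet.{u, v} K) where
  st : ∀ o, CStarAlgState (N.fib o)
  compat : ∀ ⦃o a : K⦄ (h : o ≤ a) (x : N.fib o), (st a).lin (N.incl h x) = (st o).lin x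

/-! ### Representations -/

structure NetRep (N : CStarNet.{u, v} K) where
  H : K → Type w
  [nacg : ∀ o, NormedAddCommGroup (H o)]
  [ips : ∀ o, InnerProductSpace ℂ (H o)]
  [cpl : ∀ o, CompleteSpace (H o)]
  rep : ∀ o, N.fib o →⋆ₐ[ℂ] (H o →L[ℂ] H o)
  U : ∀ ⦃o a : K⦄, o ≤ a → (H o ≃ₗᵢ[ℂ] H a)
  intertwine : ∀ ⦃o a : K⦄ (h : o ≤ a) (x : N.fib o) (v : H o),
      U h (rep o x v) = rep a (N.incl h x) (U h v)
  U_comp : ∀ ⦃o a e : K⦄ (h1 : o ≤ a) (h2 : a ≤ e) (v : H o),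
      U h2 (U h1 v) = U (h1.trans h2) v

attribute [instance] NetRep.nacg NetRep.ips NetRep.cpl

namespace NetRep

variable {N : CStarNet.{u, v} K}

def hCast (R : NetRep.{u, v, w} N) {a b : K} (h : a = b) : R.H a ≃ₗᵢ[ℂ] R.H b := by
  subst h; exact LinearIsometryEquiv.refl ℂ _

/-- The unitary `U_b` associated with a 1-simplex `b`. -/
def U1 (R : NetRep.{u, v, w} N) (s : Simplex1 K) : R.H s.d1 ≃ₗᵢ[ℂ] R.H s.d0 :=
  (R.U s.le1).trans (R.U s.le0).symm

/-- The unitary `U_p` associated with a path `p`. -/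
def Upath (R : NetRep.{u, v, w} N) {a : K} : {b : K} → SPath K a b → (R.H a ≃ₗᵢ[ℂ] R.H b)
  | _, .nil _ => LinearIsometryEquiv.refl ℂ _
  | _, .cons p s h1 h0 =>
      (Upath R p).trans (((R.hCast h1.symm).trans (R.U1 s)).trans (R.hCast h0))

/-- A representation is faithful if all the `π_o` are injective. -/
def Faithful (R : NetRep.{u, v, w} N) : Prop := ∀ o, Function.Injective (R.rep o)

/-- A representation vanishes if all the `π_o` are zero. -/
def Vanishes (R : NetRep.{u, v, w} N) : Prop := ∀ (o) (x : N.fib o), R.rep o x = 0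

/-- Quasi (topologically) trivial representation: the loop unitaries commute with the
representation of the corresponding fibre. -/
def QuasiTrivial (R : NetRep.{u, v, w} N) : Prop :=
  ∀ (o : K) (p : SPath K o o) (x : N.fib o) (v : R.H o),
    R.Upath p (R.rep o x v) = R.rep o x (R.Upath p v)

/-- Unitary equivalence of representations. -/
def Equiv (R : NetRep.{u, v, w} N) (R' : NetRep.{u, v, w'} N) : Prop :=
  ∃ T : ∀ o, R.H o ≃ₗᵢ[ℂ] R'.H o,
    (∀ (o) (x : N.fib o) (v : R.H o), T o (R.rep o x v) = R'.rep o x (T o v)) ∧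
    (∀ ⦃o a : K⦄ (h : o ≤ a) (v : R.H o), T a (R.U h v) = R'.U h (T o v))

end NetRep

/-- The representation of `N` obtained by composing a representation of `NB` with
a morphism `ε : N → NB` of nets over `K`. -/
def NetRep.ofEnvelope {N : CStarNet.{u, v} K} {NB : CStarNet.{u, v'} K}
    (ε : ∀ o, N.fib o →⋆ₐ[ℂ] NB.fib o) (hε : IsNetMorphismOver N NB ε)
    (R : NetRep.{u, v', w} NB) : NetRep.{u, v, w} N where
  H := R.H
  rep o := (R.rep o).comp (ε o)
  U := R.U
  intertwine := by
    intro o a h x v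
    show R.U h (R.rep o (ε o x) v) = R.rep a (ε a (N.incl h x)) (R.U h v)
    rw [hε h x]
    exact R.intertwine h (ε o x) v
  U_comp := R.U_comp

/-- Covariant representations of the holonomy dynamical system of a C*-net bundle,
with the action of the fundamental group presented at the level of loops. -/
structure CovRep (N : CStarNet.{u, v} K) (hN : IsCStarNetBundle N) (o : K) where
  H : Type w
  [nacg : NormedAddCommGroup H]
  [ips : InnerProductSpace ℂ H]
  [cpl : CompleteSpace H]
  eta : N.fib o →⋆ₐ[ℂ] (H →L[ℂ] H)
  V : SPath K o o → (H ≃ₗᵢ[ℂ] H)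
  V_hom : ∀ p q : SPath K o o, SPath.Homotopic p q → V p = V q
  V_mul : ∀ p q : SPath K o o, V (p.comp q) = (V p).trans (V q)
  cov : ∀ (p : SPath K o o) (x : N.fib o) (v : H),
      eta (N.holPath hN p x) (V p v) = V p (eta x v)

attribute [instance] CovRep.nacg CovRep.ips CovRep.cpl

/-- Equivalence of covariant representations. -/
def CovRep.Equiv {N : CStarNet.{u, v} K} {hN : IsCStarNetBundle N} {o : K}
    (C : CovRep.{u, v, w} N hN o) (C' : CovRep.{u, v, w'} N hN o) : Prop :=
  ∃ W : C.H ≃ₗᵢ[ℂ] C'.H,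
    (∀ (x : N.fib o) (v : C.H), W (C.eta x v) = C'.eta x (W v)) ∧
    (∀ (p : SPath K o o) (v : C.H), W (C.V p v) = C'.V p (W v))

/-- A representation of a single C*-algebra on a Hilbert space. -/
structure AlgRep (A : Type v) [CStarAlgebra A] where
  H : Type w
  [nacg : NormedAddCommGroup H]
  [ips : InnerProductSpace ℂ H]
  [cpl : CompleteSpace H]
  rho : A →⋆ₐ[ℂ] (H →L[ℂ] H)

attribute [instance] AlgRep.nacg AlgRep.ips AlgRep.cpl

/-- A Hilbert space representation (on a single Hilbert space) of the restriction of
a net of C*-algebras to a subset `P` of the poset. -/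
structure SubNetHSRep (N : CStarNet.{u, v} K) (P : Set K) where
  H : Type w
  [nacg : NormedAddCommGroup H]
  [ips : InnerProductSpace ℂ H]
  [cpl : CompleteSpace H]
  rep : ∀ o ∈ P, N.fib o →⋆ₐ[ℂ] (H →L[ℂ] H)
  compat : ∀ ⦃a o : K⦄ (ha : a ∈ P) (ho : o ∈ P) (h : a ≤ o) (x : N.fib a),
      rep o ho (N.incl h x) = rep a ha x

attribute [instance] SubNetHSRep.nacg SubNetHSRep.ips SubNetHSRep.cpl

/-! ### Amenability -/

/-- The space `ℓ∞(G)` of bounded real-valued functions on `G`. -/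
def BddFuns (G : Type w) : Submodule ℝ (G → ℝ) where
  carrier := {f | ∃ C, ∀ g, |f g| ≤ C}
  add_mem' := by
    rintro f g ⟨C, hC⟩ ⟨D, hD⟩
    exact ⟨C + D, fun x => (abs_add_le _ _).trans (add_le_add (hC x) (hD x))⟩
  zero_mem' := ⟨0, by simp⟩
  smul_mem' := by
    rintro c f ⟨C, hC⟩
    refine ⟨|c| * C, fun x => ?_⟩
    have : |c • f x| = |c| * |f x| := by simp [abs_mul]
    calc |(c • f) x| = |c| * |f x| := by simpa using this
      _ ≤ |c| * C := mul_le_mul_of_nonneg_left (hC x) (abs_nonneg c)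

def BddFuns.const (G : Type w) (r : ℝ) : BddFuns G :=
  ⟨fun _ => r, ⟨|r|, fun _ => le_rfl⟩⟩

def BddFuns.rtrans {G : Type w} [Group G] (f : BddFuns G) (h : G) : BddFuns G :=
  ⟨fun g => (f : G → ℝ) (g * h), by
    obtain ⟨C, hC⟩ := f.2
    exact ⟨C, fun g => hC (g * h)⟩⟩

/-- A right invariant mean on `ℓ∞(G)`. -/
structure RightInvariantMean (G : Type w) [Group G] where
  mean : BddFuns G →ₗ[ℝ] ℝ
  nonneg : ∀ f : BddFuns G, (∀ g, 0 ≤ (f : G → ℝ) g) → 0 ≤ mean f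
  normalized : mean (BddFuns.const G 1) = 1
  rightInv : ∀ (f : BddFuns G) (h : G), mean (BddFuns.rtrans f h) = mean f

/-- Amenability of a (discrete) group. -/
def IsAmenable (G : Type w) [Group G] : Prop := Nonempty (RightInvariantMean G)

/-! ### Covariant nets -/

/-- A `G`-covariant structure on a net of C*-algebras, where `G` acts on the poset `K`
by order preserving bijections. -/
structure CovariantNet {G : Type w} [Group G] [MulAction G K]
    (hord : ∀ (g : G) (a b : K), a ≤ b → g • a ≤ g • b) (N : CStarNet.{u, v} K) where
  act : ∀ (g : G) (o : K), N.fib o ≃⋆ₐ[ℂ] N.fib (g • o)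
  act_mul : ∀ (g h : G) (o : K) (x : N.fib o),
      N.fibCast (mul_smul h g o) (act (h * g) o x) = act h (g • o) (act g o x)
  act_incl : ∀ (g : G) ⦃a o : K⦄ (hao : a ≤ o) (x : N.fib a),
      act g o (N.incl hao x) = N.incl (hord g a o hao) (act g a x)

/-- A `G`-invariant state of a `G`-covariant net. -/
def NetState.Invariant {G : Type w} [Group G] [MulAction G K]
    {hord : ∀ (g : G) (a b : K), a ≤ b → g • a ≤ g • b} {N : CStarNet.{u, v} K}
    (α : CovariantNet hord N) (ω : NetState N) : Prop :=
  ∀ (g : G) (o : K) (x : N.fib o), (ω.st (g • o)).lin (α.act g o x) = (ω.st o).lin x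

/-! ### The generalized Čech cocycle -/

/-- A 1-simplex of the simplicial set `Σ°_*(K)`: two vertices and a nonempty support
`F` lying below both of them. -/
structure CechSimplex1 (K : Type u) [PartialOrder K] : Type u where
  F : Set K
  hne : F.Nonempty
  src : K
  tgt : K
  hsrc : ∀ a ∈ F, a ≤ src
  htgt : ∀ a ∈ F, a ≤ tgt

def CechSimplex1.swap (s : CechSimplex1 K) : CechSimplex1 K :=
  ⟨s.F, s.hne, s.tgt, s.src, s.htgt, s.hsrc⟩

/-- `A^F_o`: the C*-subalgebra of the fibre over `o` generated by the images of the
fibres over the elements of `F`. -/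
def CStarNet.fibGen (N : CStarNet.{u, v} K) (F : Set K) (o : K) (hF : ∀ a ∈ F, a ≤ o) :
    StarSubalgebra ℂ (N.fib o) :=
  (StarAlgebra.adjoin ℂ (⋃ a, ⋃ h : a ∈ F, Set.range (N.incl (hF a h)))).topologicalClosure

theorem CStarNet.mem_fibGen (N : CStarNet.{u, v} K) {F : Set K} {o : K}
    (hF : ∀ a ∈ F, a ≤ o) {a : K} (ha : a ∈ F) (x : N.fib a) :
    N.incl (hF a ha) x ∈ N.fibGen F o hF :=
  StarSubalgebra.le_topologicalClosure _
    (StarAlgebra.subset_adjoin ℂ _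
      (Set.mem_iUnion.2 ⟨a, Set.mem_iUnion.2 ⟨ha, Set.mem_range_self x⟩⟩))

/-- A generalized Čech cocycle of the net `N` defined over the collection `D` of
1-simplices of `Σ°_*(K)`. -/
structure CechCocycle (N : CStarNet.{u, v} K) (D : Set (CechSimplex1 K)) where
  zeta : ∀ s ∈ D, (N.fibGen s.F s.src s.hsrc ≃⋆ₐ[ℂ] N.fibGen s.F s.tgt s.htgt)
  compat : ∀ (s : CechSimplex1 K) (hs : s ∈ D) ⦃a : K⦄ (ha : a ∈ s.F) (x : N.fib a),
      (zeta s hs ⟨N.incl (s.hsrc a ha) x, N.mem_fibGen s.hsrc ha x⟩ : N.fib s.tgt)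
        = N.incl (s.htgt a ha) x

/-- The domain of the Čech cocycle of a net: the union of all the domains over which
a Čech cocycle of the net exists. -/
def CechDomain (N : CStarNet.{u, v} K) : Set (CechSimplex1 K) :=
  {s | ∃ D : Set (CechSimplex1 K), Nonempty (CechCocycle N D) ∧ s ∈ D}


/-- A representation of a C*-net bundle and a covariant representation of its holonomy
dynamical system correspond to each other. -/
def MatchesCov {N : CStarNet.{u, v} K} {hN : IsCStarNetBundle N} {o : K}
    (R : NetRep.{u, v, w} N) (C : CovRep.{u, v, w'} N hN o) : Prop :=
  ∃ W : R.H o ≃ₗᵢ[ℂ] C.H,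
    (∀ (x : N.fib o) (v : R.H o), W (R.rep o x v) = C.eta x (W v)) ∧
    (∀ (p : SPath K o o) (v : R.H o), W (R.Upath p v) = C.V p (W v))

/-! ### Holonomy of a C*-net bundle

Since `j_b` is the inclusion into `A_|b|` followed by the inverse inclusion, `j_p` agrees with
transport through `A_o` for any `o` above all supports of `p`. Two paths with common endpoints
whose supports lie below a common `o` therefore have the same `j`; the two sides of a triangle
(below `|c|`) and of a degeneracy move (below `|b|`) are such pairs, which gives homotopy
invariance. Since `j` turns concatenation into composition, it descends to a homomorphism on
`π₁`. -/

namespace CStarNet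

variable (N : CStarNet.{u, v} K) (hN : IsCStarNetBundle N)

theorem incl_hol1 (s : Simplex1 K) {o : K} (hs : s.supp ≤ o) (x : N.fib s.d1) :
    N.incl (s.le0.trans hs) (N.hol1 hN s x) = N.incl (s.le1.trans hs) x := by
  rw [← N.incl_comp s.le0 hs, ← N.incl_comp s.le1 hs]
  exact congrArg (N.incl hs) ((N.holEquiv hN s.le0).apply_symm_apply _)

theorem incl_holPath {o a b : K} (p : SPath K a b) (hp : p.SuppLE o) (ha : a ≤ o)
    (hb : b ≤ o) (x : N.fib a) : N.incl hb (N.holPath hN p x) = N.incl ha x := by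
  induction p with
  | nil => rfl
  | cons p s h1 h0 ih =>
    obtain ⟨hp, hs⟩ := hp
    subst h1 h0
    exact (N.incl_hol1 hN s hs _).trans (ih hp (s.le1.trans hs))

theorem holPath_eq_of_suppLE {o a b : K} {p q : SPath K a b} (hp : p.SuppLE o)
    (hq : q.SuppLE o) (ha : a ≤ o) (hb : b ≤ o) : N.holPath hN p = N.holPath hN q := by
  ext x
  apply N.incl_injective hb
  rw [N.incl_holPath hN p hp ha hb, N.incl_holPath hN q hq ha hb]

theorem holPath_comp {a b : K} (p : SPath K a b) :
    ∀ {c : K} (q : SPath K b c),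
      N.holPath hN (p.comp q) = (N.holPath hN p).trans (N.holPath hN q)
  | _, .nil _ => rfl
  | _, .cons q s h1 h0 => by
    show (N.holPath hN (p.comp q)).trans _ = _
    rw [holPath_comp p q]
    rfl

theorem holPath_triangle {a b : K} (c : Simplex2 K) (h1 : c.d2.d1 = a) (h0 : c.d0.d0 = b) :
    N.holPath hN ((SPath.single c.d2 h1 rfl).comp (SPath.single c.d0 c.h10 h0))
      = N.holPath hN (SPath.single c.d1 (c.h11.trans h1) (c.h00.symm.trans h0)) := by
  subst h1 h0
  exact N.holPath_eq_of_suppLE hN (SPath.SuppLE.comp ⟨trivial, c.le2⟩ ⟨trivial, c.le0⟩)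
    ⟨trivial, c.le1⟩ (c.d2.le1.trans c.le2) (c.d0.le0.trans c.le0)

theorem holPath_single_degenerate {a : K} (s : Simplex1 K) (h0 : s.d0 = a) (h1 : s.d1 = a)
    (hs : s.supp = a) : N.holPath hN (SPath.single s h1 h0) = StarAlgEquiv.refl ℂ (N.fib a) :=
  N.holPath_eq_of_suppLE hN (p := SPath.single s h1 h0) (q := .nil a) ⟨trivial, hs.le⟩ trivial
    le_rfl le_rfl

theorem holPath_eq_of_homotopic {a b : K} {p q : SPath K a b} (h : SPath.Homotopic p q) :
    N.holPath hN p = N.holPath hN q := by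
  induction h with
  | refl => rfl
  | symm _ ih => exact ih.symm
  | trans _ _ ih₁ ih₂ => exact ih₁.trans ih₂
  | comp_congr _ _ ih₁ ih₂ => rw [holPath_comp, holPath_comp, ih₁, ih₂]
  | degen s h0 h1 hs => exact (N.holPath_single_degenerate hN s h0 h1 hs).symm
  | triangle c h1 h0 => exact N.holPath_triangle hN c h1 h0

def holonomy (o : K) : Pi1 K o →* (N.fib o ≃⋆ₐ[ℂ] N.fib o) where
  toFun := Quotient.lift (N.holPath hN) fun _ _ => N.holPath_eq_of_homotopic hN
  map_one' := rfl
  map_mul' x y := Quotient.inductionOn₂ x y fun p q => N.holPath_comp hN q p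

end CStarNet

theorem statement_1_general {K : Type u} [PartialOrder K]
    (N : CStarNet.{u, v} K) (hN : IsCStarNetBundle N) :
    (∀ c : Simplex2 K,
        N.holPath hN ((SPath.single c.d2 rfl rfl).comp (SPath.single c.d0 c.h10 rfl))
          = N.holPath hN (SPath.single c.d1 c.h11 c.h00.symm)) ∧
    (∀ {a b : K} (p q : SPath K a b), SPath.Homotopic p q → N.holPath hN p = N.holPath hN q) ∧
    (∀ o : K, ∃ φ : Pi1 K o → (N.fib o ≃⋆ₐ[ℂ] N.fib o),
        (∀ p : SPath K o o, φ (Pi1.mk p) = N.holPath hN p) ∧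
        (∀ (x y : Pi1 K o) (v : N.fib o), φ (x * y) v = φ x (φ y v))) :=
  ⟨fun c => N.holPath_triangle hN c rfl rfl,
    fun _ _ => N.holPath_eq_of_homotopic hN,
    fun o => ⟨N.holonomy hN o, fun _ => rfl,
      fun x y v => by rw [map_mul, StarAlgEquiv.mul_apply]⟩⟩

/-- the 1-cocycle of a C*-net bundle satisfies the cocycle identity, is
homotopy invariant, and induces a group homomorphism from the fundamental group into
the group of *-automorphisms of the fibre. -/
theorem statement_1 {K : Type u} [PartialOrder K]
    (hconn : ∀ a b : K, Nonempty (SPath K a b))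
    (N : CStarNet.{u, v} K) (hN : IsCStarNetBundle N) :
    (∀ c : Simplex2 K,
        N.holPath hN ((SPath.single c.d2 rfl rfl).comp (SPath.single c.d0 c.h10 rfl))
          = N.holPath hN (SPath.single c.d1 c.h11 c.h00.symm)) ∧
    (∀ {a b : K} (p q : SPath K a b), SPath.Homotopic p q → N.holPath hN p = N.holPath hN q) ∧
    (∀ o : K, ∃ φ : Pi1 K o → (N.fib o ≃⋆ₐ[ℂ] N.fib o),
        (∀ p : SPath K o o, φ (Pi1.mk p) = N.holPath hN p) ∧
        (∀ (x y : Pi1 K o) (v : N.fib o), φ (x * y) v = φ x (φ y v))) :=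
  statement_1_general N hN

end AQFT
end
end
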